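/- Let ρ, L, γ₀ > 0 and let h : ℝ × X → X satisfy sup_{t∈ℝ} ‖h(t,0)‖ ≤ γ₀ and ‖h(t,x₁) − h(t,x₂)‖ ≤ L ‖x₁ − x₂‖ for all t ∈ ℝ and all x₁, x₂ ∈ X with ‖x₁‖ ≤ ρ and ‖x₂‖ ≤ ρ, and assume t ↦ h(t, v(t)) is continuous for every bounded continuous v. Then for every bounded continuous v : ℝ → X with sup_{t∈ℝ} ‖v(t)‖ ≤ ρ, the function Φ(v)(t) := ∫_ℝ G(t,s) h(s, v(s)) ds satisfies sup_{t∈ℝ} ‖Φ(v)(t)‖ ≤ (2(1+H)N/β)(Lρ + γ₀). -/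

import Mathlib

open MeasureTheory Real Filter Bornology

/-- An evolution family on a Banach space `X` together with an exponential dichotomy:
projections `P t`, the inverses `V s t` of the restrictions of `U t s` to the kernels
of the projections (i.e. `V s t = U_Q(s,t)` for `s ≤ t`), dichotomy constants `N, β`
and a bound `H` on the norms of the projections. -/
structure EvolutionDichotomy (X : Type*) [NormedAddCommGroup X] [NormedSpace ℝ X] where
  U : ℝ → ℝ → X →L[ℝ] X
  P : ℝ → X →L[ℝ] X
  V : ℝ → ℝ → X →L[ℝ] X
  N : ℝ
  β : ℝ
  H : ℝ
  N_pos : 0 < N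
  β_pos : 0 < β
  U_id : ∀ s, U s s = ContinuousLinearMap.id ℝ X
  U_comp : ∀ ⦃s r t : ℝ⦄, s ≤ r → r ≤ t → ∀ x, U t r (U r s x) = U t s x
  U_cont : ∀ x : X, ContinuousOn (fun p : ℝ × ℝ => U p.1 p.2 x) {p : ℝ × ℝ | p.2 ≤ p.1}
  P_proj : ∀ t x, P t (P t x) = P t x
  P_cont : ∀ x : X, Continuous fun t => P t x
  P_bound : ∀ t, ‖P t‖ ≤ H
  comm : ∀ ⦃s t : ℝ⦄, s ≤ t → ∀ x, P t (U t s x) = U t s (P s x)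
  V_mapsTo : ∀ ⦃s t : ℝ⦄, s ≤ t → ∀ x, P s (V s t (x - P t x)) = 0
  V_left : ∀ ⦃s t : ℝ⦄, s ≤ t → ∀ x, V s t (U t s (x - P s x)) = x - P s x
  V_right : ∀ ⦃s t : ℝ⦄, s ≤ t → ∀ x, U t s (V s t (x - P t x)) = x - P t x
  P_decay : ∀ ⦃s t : ℝ⦄, s ≤ t → ∀ x, ‖U t s (P s x)‖ ≤ N * Real.exp (-β * (t - s)) * ‖x‖
  Q_decay : ∀ ⦃s t : ℝ⦄, s ≤ t → ∀ x, ‖V s t (x - P t x)‖ ≤ N * Real.exp (-β * (t - s)) * ‖x‖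

namespace EvolutionDichotomy

variable {X : Type*} [NormedAddCommGroup X] [NormedSpace ℝ X]

/-- The complementary projection `Q t = Id - P t`. -/
noncomputable def Q (E : EvolutionDichotomy X) (t : ℝ) : X →L[ℝ] X :=
  ContinuousLinearMap.id ℝ X - E.P t

/-- The Green function of the dichotomy: `G t s = P t ∘ U t s` for `t > s` and
`G t s = -(U_Q(t,s) ∘ Q s)` for `t ≤ s`. -/
noncomputable def G (E : EvolutionDichotomy X) (t s : ℝ) : X →L[ℝ] X :=
  if s < t then (E.P t).comp (E.U t s) else -((E.V t s).comp (E.Q s))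

/-- The Green function is exponentially almost periodic. -/
def ExpAP (E : EvolutionDichotomy X) : Prop :=
  ∀ η > (0:ℝ), ∀ ε > (0:ℝ), ∃ γ > (0:ℝ), ∃ l > (0:ℝ), ∀ a : ℝ,
    ∃ T ∈ Set.Icc a (a + l), ∀ t s : ℝ, η ≤ |t - s| →
      ‖E.G (t + T) (s + T) - E.G t s‖ ≤ ε * Real.exp (-γ * |t - s|)

end EvolutionDichotomy

/-- A bounded continuous function `f : ℝ → X` is (Bohr) almost periodic if for every `ε > 0`
there is `l > 0` such that every interval of length `l` contains an `ε`-almost period. -/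
def AlmostPeriodic {X : Type*} [NormedAddCommGroup X] (f : ℝ → X) : Prop :=
  Continuous f ∧ Bornology.IsBounded (Set.range f) ∧
  ∀ ε > (0:ℝ), ∃ l > (0:ℝ), ∀ a : ℝ, ∃ T ∈ Set.Icc a (a + l),
    ∀ t : ℝ, ‖f (t + T) - f t‖ < ε

/-- A function on `[0,∞)` is asymptotically almost periodic if it is the sum of an almost
periodic function and a continuous function vanishing at infinity. -/
def AsympAlmostPeriodic {X : Type*} [NormedAddCommGroup X] (g : ℝ → X) : Prop :=
  ∃ h φ : ℝ → X, AlmostPeriodic h ∧ ContinuousOn φ (Set.Ici 0) ∧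
    Filter.Tendsto (fun t => ‖φ t‖) Filter.atTop (nhds 0) ∧
    ∀ t : ℝ, 0 ≤ t → g t = h t + φ t

/-- `PAP0`: bounded continuous functions with vanishing mean value. -/
def PAP0 {X : Type*} [NormedAddCommGroup X] (φ : ℝ → X) : Prop :=
  Continuous φ ∧ Bornology.IsBounded (Set.range φ) ∧
  Filter.Tendsto (fun r : ℝ => (1 / (2 * r)) * ∫ t in (-r)..r, ‖φ t‖)
    Filter.atTop (nhds 0)

/-- A bounded continuous function is pseudo almost periodic if it is the sum of an almost
periodic function and a `PAP0` function. -/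
def PseudoAP {X : Type*} [NormedAddCommGroup X] (f : ℝ → X) : Prop :=
  ∃ g φ : ℝ → X, AlmostPeriodic g ∧ PAP0 φ ∧ ∀ t : ℝ, f t = g t + φ t

/-! The Green function decays like `N e^{-β|t-s|}` on both sides of the diagonal, so integrating
it against a function bounded by `C` gives at most `N C ∫ e^{-β|u|} du = 2NC/β`. On the ball of
radius `ρ` the nonlinearity is bounded by `Lρ + γ₀`, and `2N/β ≤ 2(1+H)N/β`. -/

open Set in
lemma integrable_exp_neg_mul_abs {β : ℝ} (hβ : 0 < β) :
    Integrable fun u : ℝ => exp (-β * |u|) := by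
  rw [← integrableOn_univ, ← Iic_union_Ioi (a := 0), integrableOn_union]
  constructor
  · refine (integrableOn_exp_mul_Iic hβ 0).congr_fun (fun u hu => ?_) measurableSet_Iic
    rw [abs_of_nonpos hu, neg_mul_neg]
  · refine (integrableOn_exp_mul_Ioi (neg_lt_zero.2 hβ) 0).congr_fun (fun u hu => ?_)
      measurableSet_Ioi
    rw [abs_of_pos hu]

lemma integral_exp_neg_mul_abs {β : ℝ} (hβ : 0 < β) :
    ∫ u : ℝ, exp (-β * |u|) = 2 / β := by
  rw [integral_comp_abs (f := fun u => exp (-β * u)),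
    integral_exp_mul_Ioi (neg_lt_zero.2 hβ), mul_zero, exp_zero]
  field_simp

namespace EvolutionDichotomy

variable {X : Type*} [NormedAddCommGroup X] [NormedSpace ℝ X] (E : EvolutionDichotomy X)

lemma H_nonneg : 0 ≤ E.H :=
  (norm_nonneg _).trans (E.P_bound 0)

lemma norm_G_apply_le (t s : ℝ) (x : X) :
    ‖E.G t s x‖ ≤ E.N * exp (-E.β * |t - s|) * ‖x‖ := by
  rcases lt_or_ge s t with hst | hts
  · rw [G, if_pos hst, ContinuousLinearMap.comp_apply, E.comm hst.le,
      abs_of_pos (sub_pos.2 hst)]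
    exact E.P_decay hst.le x
  · rw [G, if_neg hts.not_gt, neg_apply, norm_neg,
      ContinuousLinearMap.comp_apply, Q, sub_apply,
      ContinuousLinearMap.id_apply, abs_sub_comm, abs_of_nonneg (sub_nonneg.2 hts)]
    exact E.Q_decay hts x

lemma norm_integral_G_apply_le {f : ℝ → X} {C : ℝ} (hf : ∀ s, ‖f s‖ ≤ C) (t : ℝ) :
    ‖∫ s, E.G t s (f s)‖ ≤ 2 * E.N * C / E.β := by
  have hdom : Integrable fun s => E.N * C * exp (-E.β * |t - s|) :=
    ((integrable_exp_neg_mul_abs E.β_pos).comp_sub_left t).const_mul _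
  calc ‖∫ s, E.G t s (f s)‖ ≤ ∫ s, E.N * C * exp (-E.β * |t - s|) := by
        refine norm_integral_le_of_norm_le hdom (Eventually.of_forall fun s => ?_)
        calc ‖E.G t s (f s)‖ ≤ E.N * exp (-E.β * |t - s|) * ‖f s‖ := E.norm_G_apply_le t s _
          _ ≤ E.N * exp (-E.β * |t - s|) * C :=
            mul_le_mul_of_nonneg_left (hf s) (mul_nonneg E.N_pos.le (exp_pos _).le)
          _ = E.N * C * exp (-E.β * |t - s|) := by ring
    _ = 2 * E.N * C / E.β := by
        rw [integral_const_mul, integral_sub_left_eq_self (fun u => exp (-E.β * |u|)),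
          integral_exp_neg_mul_abs E.β_pos]
        ring

end EvolutionDichotomy

theorem nonlinear_solution_map_bound_general
    {X : Type*} [NormedAddCommGroup X] [NormedSpace ℝ X]
    (E : EvolutionDichotomy X)
    (ρ L γ₀ : ℝ) (hL : 0 < L)
    (h : ℝ → X → X)
    (hh0 : ∀ t : ℝ, ‖h t 0‖ ≤ γ₀)
    (hhL : ∀ t : ℝ, ∀ x₁ x₂ : X, ‖x₁‖ ≤ ρ → ‖x₂‖ ≤ ρ →
      ‖h t x₁ - h t x₂‖ ≤ L * ‖x₁ - x₂‖)
    (v : ℝ → X) (hvρ : ∀ t : ℝ, ‖v t‖ ≤ ρ) :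
    ∀ t : ℝ, ‖∫ s : ℝ, E.G t s (h s (v s))‖ ≤
      (2 * (1 + E.H) * E.N / E.β) * (L * ρ + γ₀) := by
  intro t
  have hρ₀ : 0 ≤ ρ := (norm_nonneg _).trans (hvρ t)
  have hbound : ∀ s, ‖h s (v s)‖ ≤ L * ρ + γ₀ := fun s =>
    calc ‖h s (v s)‖ ≤ ‖h s (v s) - h s 0‖ + ‖h s 0‖ := norm_le_norm_sub_add _ _
      _ ≤ L * ‖v s - 0‖ + γ₀ := by
          gcongr
          · exact hhL s _ _ (hvρ s) (by rwa [norm_zero])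
          · exact hh0 s
      _ ≤ L * ρ + γ₀ := by rw [sub_zero]; gcongr; exact hvρ s
  have hC : 0 ≤ L * ρ + γ₀ := add_nonneg (mul_nonneg hL.le hρ₀) ((norm_nonneg _).trans (hh0 t))
  calc ‖∫ s, E.G t s (h s (v s))‖ ≤ 2 * E.N * (L * ρ + γ₀) / E.β :=
        E.norm_integral_G_apply_le hbound t
    _ ≤ 2 * (1 + E.H) * E.N * (L * ρ + γ₀) / E.β := by
        have := E.N_pos
        have := E.H_nonneg
        gcongr
        · exact E.β_pos.le
        · linarith
    _ = 2 * (1 + E.H) * E.N / E.β * (L * ρ + γ₀) := by ring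

/-- under the Lipschitz-type assumptions on the nonlinearity `h`,
the map `Φ(v)(t) = ∫_ℝ G(t,s) h(s,v(s)) ds` satisfies
`sup_t ‖Φ(v)(t)‖ ≤ (2(1+H)N/β)(Lρ + γ₀)` for every bounded continuous `v` with
`sup_t ‖v(t)‖ ≤ ρ`. -/
theorem nonlinear_solution_map_bound
    {X : Type*} [NormedAddCommGroup X] [NormedSpace ℝ X] [CompleteSpace X]
    (E : EvolutionDichotomy X)
    (ρ L γ₀ : ℝ) (hρ : 0 < ρ) (hL : 0 < L) (hγ₀ : 0 < γ₀)
    (h : ℝ → X → X)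
    (hh0 : ∀ t : ℝ, ‖h t 0‖ ≤ γ₀)
    (hhL : ∀ t : ℝ, ∀ x₁ x₂ : X, ‖x₁‖ ≤ ρ → ‖x₂‖ ≤ ρ →
      ‖h t x₁ - h t x₂‖ ≤ L * ‖x₁ - x₂‖)
    (hhc : ∀ v : ℝ → X, Continuous v → Bornology.IsBounded (Set.range v) →
      Continuous (fun t : ℝ => h t (v t)))
    (v : ℝ → X) (hvc : Continuous v) (hvρ : ∀ t : ℝ, ‖v t‖ ≤ ρ) :
    ∀ t : ℝ, ‖∫ s : ℝ, E.G t s (h s (v s))‖ ≤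
      (2 * (1 + E.H) * E.N / E.β) * (L * ρ + γ₀) :=
  nonlinear_solution_map_bound_general E ρ L γ₀ hL h hh0 hhL v hvρ
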